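/- Let Φ_F = {±e_i : 1 ≤ i ≤ 4} ∪ {±e_i ± e_j : 1 ≤ i < j ≤ 4} ∪ {(±1/2, ±1/2, ±1/2, ±1/2)} be the set of roots of type F_4 in ℝ^4, with dual lattice M = {a ∈ ℤ^4 : a_1 + a_2 + a_3 + a_4 is even}. Let F = {u ∈ ℝ^4 : −1 ≤ ⟨u, v⟩ ≤ 1 for all v ∈ Φ_F}. Then for every integer q ≥ 2, the topological interior of F does NOT contain representatives of every equivalence class in (1/q)M / M: there exists w ∈ (1/q)M such that every u ∈ (1/q)M with u − w ∈ M satisfies |⟨u, v⟩| ≥ 1 for some v ∈ Φ_F. (Consequently, a lattice polytope cut out by F_4 whose facet normals are exactly the rays spanned by the roots is not diagonally split for any q.) -/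

import Mathlib

open Finset

/-- The `i`-th standard basis vector of `ℝ^n`. -/
noncomputable def stdBasis (n : ℕ) (i : Fin n) : Fin n → ℝ := fun j => if j = i then 1 else 0

/-- The standard inner product on `ℝ^n`. -/
noncomputable def innerProd {n : ℕ} (u v : Fin n → ℝ) : ℝ := ∑ i, u i * v i

/-- The roots of type `F_4`: `±e_i`, `±e_i ± e_j` for `i < j`, and `(±1/2, ±1/2, ±1/2, ±1/2)`. -/
noncomputable def typeF : Set (Fin 4 → ℝ) :=
  {v | ∃ i, v = stdBasis 4 i ∨ v = -stdBasis 4 i} ∪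
  {v | ∃ i j, i < j ∧ ∃ ε δ : ℝ, (ε = 1 ∨ ε = -1) ∧ (δ = 1 ∨ δ = -1) ∧
    v = ε • stdBasis 4 i + δ • stdBasis 4 j} ∪
  {v | ∀ i, v i = 1/2 ∨ v i = -1/2}

/-- The dual lattice of the `F_4` root lattice: integer vectors with even coordinate sum. -/
def evenLattice : Set (Fin 4 → ℝ) :=
  {a | (∀ i, ∃ m : ℤ, a i = m) ∧ ∃ m : ℤ, ∑ i, a i = 2 * m}

/-!
If `q` is even take `w = e₁`, otherwise `w = (1, 1/q, 1/q, 1/q)`; both are `(1, c, c, c)` with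
`0 ≤ c ≤ 1/2`, and `q • w ∈ M`. Let `u = w + m` with `m ∈ M` pair with every root to less than `1`
in absolute value. The roots `e_i` force `u₁ = 1 + m₁` to vanish, and the roots `e_i - e_j`
force `m₂ = m₃ = m₄`, so parity makes this common value `t` odd. But then either `u₂ = c + t ≥ 1`
or `⟨u, e₂ + e₃⟩ = 2c + 2t ≤ -1`.
-/

lemma innerProd_stdBasis {n : ℕ} (u : Fin n → ℝ) (i : Fin n) :
    innerProd u (stdBasis n i) = u i := by
  simp [innerProd, stdBasis]

lemma innerProd_smul_stdBasis_add_smul_stdBasis {n : ℕ} (u : Fin n → ℝ) (i j : Fin n)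
    (ε δ : ℝ) : innerProd u (ε • stdBasis n i + δ • stdBasis n j) = ε * u i + δ * u j := by
  simp [innerProd, stdBasis, mul_add, sum_add_distrib, mul_comm]

lemma stdBasis_mem_typeF (i : Fin 4) : stdBasis 4 i ∈ typeF :=
  Or.inl (Or.inl ⟨i, Or.inl rfl⟩)

lemma smul_stdBasis_add_smul_stdBasis_mem_typeF {i j : Fin 4} (hij : i < j) {ε δ : ℝ}
    (hε : ε = 1 ∨ ε = -1) (hδ : δ = 1 ∨ δ = -1) :
    ε • stdBasis 4 i + δ • stdBasis 4 j ∈ typeF :=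
  Or.inl (Or.inr ⟨i, j, hij, ε, δ, hε, hδ, rfl⟩)

lemma mem_evenLattice_iff {a : Fin 4 → ℝ} :
    a ∈ evenLattice ↔ ∃ m : Fin 4 → ℤ, (∀ i, a i = m i) ∧ Even (∑ i, m i) := by
  constructor
  · rintro ⟨hint, k, hk⟩
    choose m hm using hint
    refine ⟨m, hm, k, ?_⟩
    have : ((∑ i, m i : ℤ) : ℝ) = ((k + k : ℤ) : ℝ) := by
      push_cast
      simp only [← hm, hk]
      ring
    exact_mod_cast this
  · rintro ⟨m, hm, k, hk⟩
    refine ⟨fun i => ⟨m i, hm i⟩, k, ?_⟩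
    simp only [hm]
    exact_mod_cast (by omega : ∑ i, m i = 2 * k)

lemma int_eq_zero_of_abs_cast_lt_one {n : ℤ} (h : |(n : ℝ)| < 1) : n = 0 :=
  Int.abs_lt_one_iff.mp (by exact_mod_cast h)

theorem exists_mem_typeF_one_le_abs_innerProd_of_sub_mem {c : ℝ} (hc₀ : 0 ≤ c) (hc : c ≤ 1 / 2)
    {u : Fin 4 → ℝ} (hu : u - ![1, c, c, c] ∈ evenLattice) :
    ∃ v ∈ typeF, 1 ≤ |innerProd u v| := by
  obtain ⟨m, hm, heven⟩ := mem_evenLattice_iff.mp hu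
  have hu₀ : u 0 = 1 + m 0 := by simp [← hm 0]
  have hu_of_ne : ∀ i, i ≠ 0 → u i = c + m i := fun i hi => by
    rw [← hm i]; fin_cases i <;> simp_all
  by_contra! h
  have hcoord : ∀ i, |u i| < 1 := fun i => by
    simpa [innerProd_stdBasis] using h _ (stdBasis_mem_typeF i)
  have hpair : ∀ i j : Fin 4, i < j → ∀ ε δ : ℝ, (ε = 1 ∨ ε = -1) → (δ = 1 ∨ δ = -1) →
      |ε * u i + δ * u j| < 1 := fun i j hij ε δ hε hδ => by
    simpa [innerProd_smul_stdBasis_add_smul_stdBasis] using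
      h _ (smul_stdBasis_add_smul_stdBasis_mem_typeF hij hε hδ)
  have hm₀ : m 0 = -1 := by
    have := int_eq_zero_of_abs_cast_lt_one (n := m 0 + 1) (by
      push_cast; simpa [hu₀, add_comm] using hcoord 0)
    omega
  have hdiff : ∀ j : Fin 4, 1 < j → m 1 = m j := fun j hj => by
    have := int_eq_zero_of_abs_cast_lt_one (n := m 1 - m j) (by
      have := hpair 1 j hj 1 (-1) (.inl rfl) (.inr rfl)
      rw [hu_of_ne 1 one_ne_zero, hu_of_ne j (by grind)] at this
      push_cast; convert this using 2; ring)
    omega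
  have hm₁ : m 1 ≠ 0 := by
    obtain ⟨k, hk⟩ := heven
    rw [Fin.sum_univ_four, hm₀, ← hdiff 2 (by decide), ← hdiff 3 (by decide)] at hk
    omega
  have h₁ := hcoord 1
  have h₁₂ := hpair 1 2 (by decide) 1 1 (.inl rfl) (.inl rfl)
  rw [hu_of_ne 1 one_ne_zero] at h₁
  rw [hu_of_ne 1 one_ne_zero, hu_of_ne 2 (by decide), ← hdiff 2 (by decide)] at h₁₂
  rcases hm₁.lt_or_gt with hneg | hpos
  · have : (m 1 : ℝ) ≤ -1 := by exact_mod_cast Int.le_sub_one_of_lt hneg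
    rw [abs_lt] at h₁₂
    linarith
  · have : (1 : ℝ) ≤ m 1 := by exact_mod_cast hpos
    rw [abs_lt] at h₁
    linarith

/-- For each `q ≥ 2`, the interior of the diagonal splitting polytope
`F = {u | -1 ≤ ⟨u,v⟩ ≤ 1 for all v ∈ F_4}` does not contain representatives of every
class of `(1/q)M / M`, where `M` is the dual of the `F_4` root lattice: some class
`w + M` meets the interior of `F` in no point, i.e. every representative `u` pairs with
some root with absolute value at least `1`. -/
theorem typeF_not_diagonally_split (q : ℤ) (hq : 2 ≤ q) :
    ∃ w : Fin 4 → ℝ, (q : ℝ) • w ∈ evenLattice ∧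
      ∀ u : Fin 4 → ℝ, (q : ℝ) • u ∈ evenLattice → u - w ∈ evenLattice →
        ∃ v ∈ typeF, 1 ≤ |innerProd u v| := by
  rcases Int.even_or_odd q with hq_even | hq_odd
  · refine ⟨![1, 0, 0, 0], mem_evenLattice_iff.mpr ⟨![q, 0, 0, 0], fun i => ?_, ?_⟩,
      fun u _ hu => exists_mem_typeF_one_le_abs_innerProd_of_sub_mem le_rfl (by norm_num) hu⟩
    · fin_cases i <;> simp
    · simpa [Fin.sum_univ_four] using hq_even
  · have hq₀ : (q : ℝ) ≠ 0 := by positivity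
    refine ⟨![1, (q : ℝ)⁻¹, (q : ℝ)⁻¹, (q : ℝ)⁻¹],
      mem_evenLattice_iff.mpr ⟨![q, 1, 1, 1], fun i => ?_, ?_⟩,
      fun u _ hu => exists_mem_typeF_one_le_abs_innerProd_of_sub_mem (by positivity) ?_ hu⟩
    · fin_cases i <;> simp [hq₀]
    · simpa [Fin.sum_univ_four, add_assoc] using hq_odd.add_odd (by decide : Odd (3 : ℤ))
    · rw [one_div]
      exact inv_anti₀ two_pos (by exact_mod_cast hq)
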